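/- arXiv:0803.1673 — 3 statements merged into one kernel-verified Lean document; each statement's English description precedes it below -/
import Mathlib

section
/- Let d ≥ 1 and let T_{μν} (μ, ν ∈ Fin d) be a family of smooth functions on ℝ^d that is symmetric, T_{μν} = T_{νμ}, and satisfies the closedness condition ∂_μ T_{νλ} = ∂_ν T_{μλ} on all of ℝ^d for all μ, ν, λ. Then there exists a smooth function f : ℝ^d → ℝ such that T_{μν} = ∂_μ∂_ν f for all μ, ν. (Equivalently, H¹_K(ℝ^d) = 0: every closed element of K¹(ℝ^d) is the Hessian of a smooth function.) -/
/-!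
Apply the Poincaré lemma for closed 1-forms twice. For each `λ` the column `μ ↦ T μ λ` is a
closed 1-form, so `T μ λ = ∂_μ g_λ`. By the symmetry of `T`, `∂_μ g_ν = T μ ν = T ν μ = ∂_ν g_μ`,
so `g` is closed as well and `g_ν = ∂_ν f`, whence `T μ ν = ∂_μ ∂_ν f`.
-/

/-- The partial derivative of `f : ℝ^d → ℝ` in the `μ`-th coordinate direction. -/
noncomputable def pd {d : ℕ} (μ : Fin d) (f : EuclideanSpace ℝ (Fin d) → ℝ) :
    EuclideanSpace ℝ (Fin d) → ℝ :=
  fun x => fderiv ℝ f x (EuclideanSpace.single μ 1)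

theorem exists_contDiff_fderiv_eq_of_fderiv_symmetric {E F : Type*}
    [NormedAddCommGroup E] [NormedSpace ℝ E] [NormedAddCommGroup F] [NormedSpace ℝ F]
    [CompleteSpace F] {n : ℕ∞} {ω : E → E →L[ℝ] F} (hω : ContDiff ℝ n ω) (hn : 1 ≤ n)
    (hdω : ∀ a x y, fderiv ℝ ω a x y = fderiv ℝ ω a y x) :
    ∃ f : E → F, ContDiff ℝ (n + 1) f ∧ fderiv ℝ f = ω := by
  obtain ⟨f, hf⟩ := convex_univ.exists_forall_hasFDerivAt_of_fderiv_symmetric isOpen_univ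
    (hω.differentiable (by exact_mod_cast (one_pos.trans_le hn).ne')).differentiableOn
    fun a _ => hdω a
  have hdf : fderiv ℝ f = ω := funext fun a => (hf a trivial).fderiv
  refine ⟨f, contDiff_succ_iff_fderiv.2 ⟨fun a => (hf a trivial).differentiableAt, ?_, ?_⟩, hdf⟩
  · simp
  · rwa [hdf]

theorem ContinuousLinearMap.apply_comm_of_basis {ι 𝕜 E F : Type*} [NontriviallyNormedField 𝕜]
    [NormedAddCommGroup E] [NormedSpace 𝕜 E] [NormedAddCommGroup F] [NormedSpace 𝕜 F]
    (b : Module.Basis ι 𝕜 E) (D : E →L[𝕜] E →L[𝕜] F)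
    (hD : ∀ i j, D (b i) (b j) = D (b j) (b i)) (v w : E) :
    D v w = D w v := by
  have : D.toLinearMap₁₂ = D.flip.toLinearMap₁₂ :=
    LinearMap.ext_basis b b fun i j => by simpa using hD i j
  simpa using congr($this v w)

namespace EuclideanSpace

variable {d : ℕ}

noncomputable def coordForm (S : Fin d → EuclideanSpace ℝ (Fin d) → ℝ) :
    EuclideanSpace ℝ (Fin d) → EuclideanSpace ℝ (Fin d) →L[ℝ] ℝ :=
  fun x => ∑ μ, S μ x • (proj μ : EuclideanSpace ℝ (Fin d) →L[ℝ] ℝ)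

variable {S : Fin d → EuclideanSpace ℝ (Fin d) → ℝ}

theorem coordForm_apply_single (x : EuclideanSpace ℝ (Fin d)) (μ : Fin d) :
    coordForm S x (single μ 1) = S μ x := by
  simp [coordForm, PiLp.single_apply]

theorem contDiff_coordForm {n : WithTop ℕ∞} (hS : ∀ μ, ContDiff ℝ n (S μ)) :
    ContDiff ℝ n (coordForm S) :=
  ContDiff.sum fun μ _ => (hS μ).smul contDiff_const

theorem fderiv_coordForm_apply_single (hS : ∀ μ, Differentiable ℝ (S μ))
    (x : EuclideanSpace ℝ (Fin d)) (μ ν : Fin d) :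
    fderiv ℝ (coordForm S) x (single ν 1) (single μ 1) = pd ν (S μ) x := by
  have : HasFDerivAt (coordForm S)
      (∑ μ, (fderiv ℝ (S μ) x).smulRight (proj μ : EuclideanSpace ℝ (Fin d) →L[ℝ] ℝ)) x :=
    HasFDerivAt.fun_sum fun μ _ =>
      (hS μ x).hasFDerivAt.smul_const (proj μ : EuclideanSpace ℝ (Fin d) →L[ℝ] ℝ)
  simp [this.fderiv, pd, PiLp.single_apply]

end EuclideanSpace

open EuclideanSpace in
theorem exists_contDiff_pd_eq_of_pd_comm {d : ℕ} {n : ℕ∞}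
    {S : Fin d → EuclideanSpace ℝ (Fin d) → ℝ} (hS : ∀ μ, ContDiff ℝ n (S μ)) (hn : 1 ≤ n)
    (hclosed : ∀ μ ν x, pd μ (S ν) x = pd ν (S μ) x) :
    ∃ f, ContDiff ℝ (n + 1) f ∧ ∀ μ, pd μ f = S μ := by
  have hS' : ∀ μ, Differentiable ℝ (S μ) :=
    fun μ => (hS μ).differentiable (by exact_mod_cast (one_pos.trans_le hn).ne')
  obtain ⟨f, hf, hdf⟩ := exists_contDiff_fderiv_eq_of_fderiv_symmetric (contDiff_coordForm hS) hn
    fun x => (fderiv ℝ (coordForm S) x).apply_comm_of_basis (basisFun (Fin d) ℝ).toBasis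
      fun ν μ => by simpa [fderiv_coordForm_apply_single hS'] using hclosed ν μ x
  exact ⟨f, hf, fun μ => funext fun x => by simp [pd, hdf, coordForm_apply_single]⟩

theorem stmt1_general (d : ℕ)
    (T : Fin d → Fin d → EuclideanSpace ℝ (Fin d) → ℝ)
    (hsmooth : ∀ μ ν, ContDiff ℝ (⊤ : ℕ∞) (T μ ν))
    (hsymm : ∀ μ ν, T μ ν = T ν μ)
    (hclosed : ∀ (μ ν lam : Fin d) (x : EuclideanSpace ℝ (Fin d)),
      pd μ (T ν lam) x = pd ν (T μ lam) x) :
    ∃ f : EuclideanSpace ℝ (Fin d) → ℝ, ContDiff ℝ (⊤ : ℕ∞) f ∧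
      ∀ (μ ν : Fin d) (x : EuclideanSpace ℝ (Fin d)), T μ ν x = pd μ (pd ν f) x := by
  choose g hg hdg using fun lam =>
    exists_contDiff_pd_eq_of_pd_comm (fun μ => hsmooth μ lam) le_top fun μ ν => hclosed μ ν lam
  obtain ⟨f, hf, hdf⟩ :=
    exists_contDiff_pd_eq_of_pd_comm (fun ν => (hg ν).of_succ) le_top fun μ ν x => by
      rw [hdg, hdg, hsymm]
  exact ⟨f, hf.of_succ, fun μ ν x => by rw [hdf, hdg]⟩

/-- If `T = T μ ν` is a symmetric family of smooth functions on `ℝ^d`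
(`d ≥ 1`) with `∂_μ T ν λ = ∂_ν T μ λ` everywhere, then `T` is the Hessian of some smooth
function `f`.  (Degree-1 Poincaré lemma for the complex `K^*(ℝ^d)`: `H¹_K(ℝ^d) = 0`.) -/
theorem stmt1 (d : ℕ) (hd : 1 ≤ d)
    (T : Fin d → Fin d → EuclideanSpace ℝ (Fin d) → ℝ)
    (hsmooth : ∀ μ ν, ContDiff ℝ (⊤ : ℕ∞) (T μ ν))
    (hsymm : ∀ μ ν, T μ ν = T ν μ)
    (hclosed : ∀ (μ ν lam : Fin d) (x : EuclideanSpace ℝ (Fin d)),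
      pd μ (T ν lam) x = pd ν (T μ lam) x) :
    ∃ f : EuclideanSpace ℝ (Fin d) → ℝ, ContDiff ℝ (⊤ : ℕ∞) f ∧
      ∀ (μ ν : Fin d) (x : EuclideanSpace ℝ (Fin d)), T μ ν x = pd μ (pd ν f) x :=
  stmt1_general d T hsmooth hsymm hclosed
end

section
/- Let d ≥ 1 and n ≥ 1, and let T : (Fin(n+1) → Fin d) → ℝ be a covariant (n+1)-tensor satisfying the K-condition of degree n. Then ψ(φ(T)) = T; explicitly, for every multi-index (μ_1, …, μ_n, ν): (2n/(n+1)) · (1/n!) · Σ_{σ ∈ Perm(Fin n)} sign(σ) · ½ (T(μ_{σ(1)}, …, μ_{σ(n)}, ν) + T(μ_{σ(1)}, …, μ_{σ(n−1)}, ν, μ_{σ(n)})) = T(μ_1, …, μ_n, ν). -/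
/-!
Every permutation of `Fin (n + 1)` is uniquely `swap k last * σ'` with `σ'` fixing the last slot.
Antisymmetry in the first `n` slots absorbs `σ'`, so the vanishing full antisymmetrization says
`T μ = ∑_{k < n} T (μ ∘ swap k last)`. In `ψ (φ T)` the first half of the symmetrization
contributes `n! · T`; in the second half, pushing `σ` past the transposition of the last two slots
turns the sum into `(n - 1)!` times the sum above, i.e. `(n - 1)! · T`. Finally
`(2n / (n + 1)) · (1 / n!) · ½ · (n! + (n - 1)!) = 1`.
-/

/-- The sign of a permutation, as a real number. -/
def sgn {n : ℕ} (σ : Equiv.Perm (Fin n)) : ℝ := ((Equiv.Perm.sign σ : ℤ) : ℝ)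

open Equiv Finset

section Sgn

variable {n : ℕ}

theorem sgn_mul (σ τ : Perm (Fin n)) : sgn (σ * τ) = sgn σ * sgn τ := by
  simp [sgn]

theorem sgn_one : sgn (1 : Perm (Fin n)) = 1 := by
  simp [sgn]

theorem sgn_swap {i j : Fin n} (h : i ≠ j) : sgn (swap i j) = -1 := by
  simp [sgn, Perm.sign_swap h]

theorem sgn_mul_sgn_mul (σ : Perm (Fin n)) (x : ℝ) : sgn σ * (sgn σ * x) = x := by
  rw [← mul_assoc, ← sgn_mul]
  simp [sgn]

end Sgn

namespace Equiv.Perm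

variable {n : ℕ}

def liftLast (σ : Perm (Fin n)) : Perm (Fin (n + 1)) :=
  finSuccEquivLast.symm.permCongr σ.optionCongr

@[simp]
theorem liftLast_castSucc (σ : Perm (Fin n)) (i : Fin n) :
    liftLast σ i.castSucc = (σ i).castSucc := by
  simp [liftLast, permCongr_apply, finSuccEquivLast_symm_some]

@[simp]
theorem liftLast_last (σ : Perm (Fin n)) : liftLast σ (Fin.last n) = Fin.last n := by
  simp [liftLast, permCongr_apply]

theorem sgn_liftLast (σ : Perm (Fin n)) : sgn (liftLast σ) = sgn σ := by
  simp [sgn, liftLast]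

theorem liftLast_injective : Function.Injective (liftLast (n := n)) := fun σ τ h =>
  Equiv.ext fun i => Fin.castSucc_injective n <| by
    simpa using DFunLike.congr_fun h i.castSucc

theorem bijective_swap_last_mul_liftLast :
    Function.Bijective
      (fun p : Fin (n + 1) × Perm (Fin n) => swap p.1 (Fin.last n) * liftLast p.2) := by
  refine (Fintype.bijective_iff_injective_and_card _).2
    ⟨?_, by simp [Fintype.card_perm, Nat.factorial_succ]⟩
  rintro ⟨k, σ⟩ ⟨k', σ'⟩ h
  obtain rfl : k = k' := by simpa using DFunLike.congr_fun h (Fin.last n)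
  exact congrArg _ (liftLast_injective (mul_left_cancel h))

theorem sum_eq_sum_swap_last_mul_liftLast {M : Type*} [AddCommMonoid M]
    (F : Perm (Fin (n + 1)) → M) :
    ∑ τ, F τ = ∑ k, ∑ σ, F (swap k (Fin.last n) * liftLast σ) := by
  rw [← Fintype.sum_prod_type']
  exact (Fintype.sum_bijective _ bijective_swap_last_mul_liftLast _ _ fun _ => rfl).symm

theorem sum_apply_eq_factorial_smul_sum {M : Type*} [AddCommMonoid M] (j : Fin (n + 1))
    (g : Fin (n + 1) → M) :
    ∑ σ : Perm (Fin (n + 1)), g (σ j) = n.factorial • ∑ k, g k := by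
  rw [← (Group.mulRight_bijective (swap 0 j)).sum_comp fun σ => g (σ j),
    ← decomposeFin.symm.sum_comp, Fintype.sum_prod_type, Finset.sum_comm]
  simp [Perm.mul_apply, decomposeFin_symm_apply_zero, Fintype.card_perm]

end Equiv.Perm

open Equiv.Perm

variable {α : Type*} {n : ℕ}

theorem Fin.snoc_comp_liftLast (μ : Fin n → α) (ν : α) (σ : Perm (Fin n)) :
    (fun i => (Fin.snoc μ ν : Fin (n + 1) → α) (liftLast σ i)) =
      Fin.snoc (fun i => μ (σ i)) ν := by
  funext i
  cases i using Fin.lastCases <;> simp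

def IsAntisymmExceptLast (T : (Fin (n + 1) → α) → ℝ) : Prop :=
  ∀ σ : Perm (Fin (n + 1)), σ (Fin.last n) = Fin.last n →
    ∀ μ : Fin (n + 1) → α, T (fun i => μ (σ i)) = sgn σ * T μ

def AntisymmetrizationVanishes (T : (Fin n → α) → ℝ) : Prop :=
  ∀ μ : Fin n → α, ∑ σ : Perm (Fin n), sgn σ * T (fun i => μ (σ i)) = 0

namespace IsAntisymmExceptLast

theorem apply_liftLast {T : (Fin (n + 1) → α) → ℝ} (hT : IsAntisymmExceptLast T)
    (σ : Perm (Fin n)) (μ : Fin (n + 1) → α) :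
    T (fun i => μ (liftLast σ i)) = sgn σ * T μ := by
  rw [hT _ (liftLast_last σ), sgn_liftLast]

theorem sum_sgn_mul_snoc {T : (Fin (n + 1) → α) → ℝ} (hT : IsAntisymmExceptLast T)
    (μ : Fin n → α) (ν : α) :
    ∑ σ : Perm (Fin n), sgn σ * T (Fin.snoc (fun i => μ (σ i)) ν) =
      n.factorial * T (Fin.snoc μ ν) := by
  simp [← Fin.snoc_comp_liftLast, hT.apply_liftLast, sgn_mul_sgn_mul, Fintype.card_perm]

theorem sum_swap_castSucc_last {T : (Fin (n + 1) → α) → ℝ} (hT : IsAntisymmExceptLast T)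
    (hV : AntisymmetrizationVanishes T) (ρ : Fin (n + 1) → α) :
    ∑ k : Fin n, T (fun i => ρ (swap k.castSucc (Fin.last n) i)) = T ρ := by
  have hterm : ∀ k σ, sgn (swap k (Fin.last n) * liftLast σ) *
      T (fun i => ρ ((swap k (Fin.last n) * liftLast σ) i)) =
      sgn (swap k (Fin.last n)) * T (fun i => ρ (swap k (Fin.last n) i)) := fun k σ => by
    have h := hT.apply_liftLast σ (fun i => ρ (swap k (Fin.last n) i))
    simp only [Perm.mul_apply] at h ⊢
    rw [h, sgn_mul, sgn_liftLast, mul_assoc, sgn_mul_sgn_mul]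
  have h := hV ρ
  simp only [sum_eq_sum_swap_last_mul_liftLast, hterm, sum_const, card_univ, Fintype.card_perm,
    Fintype.card_fin, nsmul_eq_mul, ← mul_sum, mul_eq_zero, Nat.cast_eq_zero,
    Nat.factorial_ne_zero, false_or, Fin.sum_univ_castSucc,
    sgn_swap (Fin.castSucc_lt_last _).ne] at h
  simp only [swap_self, ← Perm.one_def, sgn_one, Perm.one_apply, one_mul] at h
  linarith

theorem sum_sgn_mul_snoc_comp_swap {T : (Fin (n + 1 + 1) → α) → ℝ}
    (hT : IsAntisymmExceptLast T) (hV : AntisymmetrizationVanishes T)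
    (μ : Fin (n + 1) → α) (ν : α) (j : Fin (n + 1)) :
    ∑ σ : Perm (Fin (n + 1)), sgn σ *
        T ((Fin.snoc (fun i => μ (σ i)) ν : Fin (n + 1 + 1) → α) ∘ swap j.castSucc (Fin.last _)) =
      n.factorial * T (Fin.snoc μ ν) := by
  set ρ : Fin (n + 1 + 1) → α := Fin.snoc μ ν
  have hterm : ∀ σ : Perm (Fin (n + 1)), sgn σ *
      T ((Fin.snoc (fun i => μ (σ i)) ν : Fin (n + 1 + 1) → α) ∘ swap j.castSucc (Fin.last _)) =
      T (fun i => ρ (swap (σ j).castSucc (Fin.last _) i)) := fun σ => by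
    have hcomm := mul_swap_eq_swap_mul (liftLast σ) j.castSucc (Fin.last _)
    rw [liftLast_castSucc, liftLast_last] at hcomm
    have hfun : (Fin.snoc (fun i => μ (σ i)) ν : Fin (n + 1 + 1) → α) ∘
        swap j.castSucc (Fin.last _) =
          fun i => ρ (swap (σ j).castSucc (Fin.last _) (liftLast σ i)) := by
      rw [← Fin.snoc_comp_liftLast]
      funext i
      exact congrArg ρ (DFunLike.congr_fun hcomm i)
    rw [hfun, hT.apply_liftLast σ (fun i => ρ (swap (σ j).castSucc (Fin.last _) i)),
      sgn_mul_sgn_mul]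
  simp only [hterm]
  rw [sum_apply_eq_factorial_smul_sum j
      (fun k => T (fun i => ρ (swap k.castSucc (Fin.last _) i))),
    hT.sum_swap_castSucc_last hV, nsmul_eq_mul]

end IsAntisymmExceptLast

/-- (Proposition 3: `ψ ∘ φ = Id` on `K^n`.)  Let `d ≥ 1`, `n ≥ 1`, and let
`T : (Fin (n+1) → Fin d) → ℝ` be a covariant `(n+1)`-tensor satisfying the K-condition of
degree `n`: antisymmetric in its first `n` indices (i.e. `T (μ ∘ σ) = sign σ * T μ` for every
permutation `σ` fixing the last slot), with vanishing full antisymmetrization over all `n+1`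
indices.  Then for every multi-index `(μ₁,…,μ_n, ν)`,
`(2n/(n+1)) · (1/n!) · ∑_σ sign σ · ½ (T(μ_{σ(1)},…,μ_{σ(n)},ν) + T(μ_{σ(1)},…,μ_{σ(n−1)},ν,μ_{σ(n)}))
  = T(μ₁,…,μ_n,ν)`. -/
theorem stmt3 (d n : ℕ) (hn : 1 ≤ n)
    (T : (Fin (n + 1) → Fin d) → ℝ)
    (hTanti : ∀ σ : Equiv.Perm (Fin (n + 1)), σ (Fin.last n) = Fin.last n →
      ∀ μ : Fin (n + 1) → Fin d, T (fun i => μ (σ i)) = sgn σ * T μ)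
    (hTfull : ∀ μ : Fin (n + 1) → Fin d,
      ∑ σ : Equiv.Perm (Fin (n + 1)), sgn σ * T (fun i => μ (σ i)) = 0) :
    ∀ (μ : Fin n → Fin d) (ν : Fin d),
      (2 * (n : ℝ) / ((n : ℝ) + 1)) * (Nat.factorial n : ℝ)⁻¹ *
        ∑ σ : Equiv.Perm (Fin n), sgn σ *
          ((1 / 2 : ℝ) *
            (T (Fin.snoc (fun i => μ (σ i)) ν) +
             T ((Fin.snoc (fun i => μ (σ i)) ν : Fin (n + 1) → Fin d) ∘
                 Equiv.swap (⟨n - 1, by omega⟩ : Fin (n + 1)) (Fin.last n)))) =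
      T (Fin.snoc μ ν) := by
  intro μ ν
  obtain ⟨m, rfl⟩ : ∃ m, n = m + 1 := ⟨n - 1, by omega⟩
  have hidx : (⟨m + 1 - 1, by omega⟩ : Fin (m + 1 + 1)) = (Fin.last m).castSucc :=
    Fin.ext (by simp)
  simp only [hidx, mul_left_comm (sgn _) (1 / 2 : ℝ), mul_add, ← mul_sum, sum_add_distrib,
    IsAntisymmExceptLast.sum_sgn_mul_snoc hTanti,
    IsAntisymmExceptLast.sum_sgn_mul_snoc_comp_swap hTanti hTfull, Nat.factorial_succ]
  push_cast
  field_simp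
end

section
/- Work on ℝ⁴ with coordinates x⁰ = t and x¹, x², x³, and let H : ℝ³ → ℝ and f, g : ℝ → ℝ be smooth with f > 0 and g > 0 everywhere. Define the diagonal metric components g_{00} = f(H(x¹,x²,x³)), g_{jj} = −g(H(x¹,x²,x³)) for j = 1,2,3, and g_{μν} = 0 for μ ≠ ν, with inverse components g^{00} = 1/f(H), g^{jj} = −1/g(H), g^{μν} = 0 for μ ≠ ν. Define Γ^τ_{νλ} = ½ Σ_ρ g^{τρ}(∂_ν g_{ρλ} + ∂_λ g_{ρν} − ∂_ρ g_{νλ}) and Γ_{μνλ} = Σ_τ η_{μτ} Γ^τ_{νλ}, where η = diag(+1,−1,−1,−1). Then the components of Γ are: Γ_{0j0} = Γ_{00j} = ½ ∂_j(log(f∘H)) for 1 ≤ j ≤ 3; Γ_{j00} = −∂_j(f∘H)/(2 g(H)) for 1 ≤ j ≤ 3; Γ_{kjk} = Γ_{kkj} = −½ ∂_j(log(g∘H)) for 1 ≤ j, k ≤ 3; Γ_{jkk} = ½ ∂_j(log(g∘H)) for 1 ≤ j ≠ k ≤ 3; and every component of Γ not of one of these forms is zero. -/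
/-- The partial derivative of a function on `ℝ⁴` (or `ℝⁿ`) in the `j`-th coordinate
direction. -/
noncomputable def pdR {n : ℕ} (j : Fin n) (f : (Fin n → ℝ) → ℝ) : (Fin n → ℝ) → ℝ :=
  fun x => fderiv ℝ f x (Pi.single j 1)

/-- The spatial part `(x¹, x², x³)` of a point of `ℝ⁴` (with `x⁰ = t`). -/
def sp (x : Fin 4 → ℝ) : Fin 3 → ℝ := fun j => x j.succ

/-- The diagonal metric components of `ds² = f(H) dt² − g(H) d\vec{x}²`:
`g₀₀ = f(H(x¹,x²,x³))`, `g_jj = −g(H(x¹,x²,x³))` for `j = 1,2,3`, zero off-diagonal. -/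
noncomputable def met (f g : ℝ → ℝ) (H : (Fin 3 → ℝ) → ℝ) (μ ν : Fin 4) :
    (Fin 4 → ℝ) → ℝ :=
  fun x => if μ = ν then (if μ = 0 then f (H (sp x)) else -(g (H (sp x)))) else 0

/-- The inverse metric components: `g⁰⁰ = 1/f(H)`, `g^jj = −1/g(H)`, zero off-diagonal. -/
noncomputable def metInv (f g : ℝ → ℝ) (H : (Fin 3 → ℝ) → ℝ) (μ ν : Fin 4) :
    (Fin 4 → ℝ) → ℝ :=
  fun x => if μ = ν then (if μ = 0 then (f (H (sp x)))⁻¹ else -(g (H (sp x)))⁻¹) else 0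

/-- The flat metric `η = diag(+1, −1, −1, −1)`. -/
noncomputable def eta (μ ν : Fin 4) : ℝ :=
  if μ = ν then (if μ = 0 then 1 else -1) else 0

/-- The Christoffel symbols
`Γ^τ_{νλ} = ½ ∑_ρ g^{τρ} (∂_ν g_{ρλ} + ∂_λ g_{ρν} − ∂_ρ g_{νλ})`. -/
noncomputable def chrUp (f g : ℝ → ℝ) (H : (Fin 3 → ℝ) → ℝ) (τ ν lam : Fin 4) :
    (Fin 4 → ℝ) → ℝ :=
  fun x => (1 / 2 : ℝ) * ∑ ρ : Fin 4, metInv f g H τ ρ x *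
    (pdR ν (met f g H ρ lam) x + pdR lam (met f g H ρ ν) x - pdR ρ (met f g H ν lam) x)

/-- The Christoffel symbols with the upper index lowered by the flat metric `η`:
`Γ_{μνλ} = ∑_τ η_{μτ} Γ^τ_{νλ}`. -/
noncomputable def chrLow (f g : ℝ → ℝ) (H : (Fin 3 → ℝ) → ℝ) (μ ν lam : Fin 4) :
    (Fin 4 → ℝ) → ℝ :=
  fun x => ∑ τ : Fin 4, eta μ τ * chrUp f g H τ ν lam x

/-! Because the metric and `η` are diagonal, each sum defining `Γ_{μνλ}` collapses to its `τ = ρ = μ`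
term, and `η_{μμ} g^{μμ}` is `1/f(H)` for `μ = 0` and `1/g(H)` otherwise. In the remaining
bracket `∂_ν g_{μλ} + ∂_λ g_{μν} − ∂_μ g_{νλ}` a term survives only if its two metric indices
agree and its derivative is spatial, since the metric does not depend on `t`; the logarithmic
derivatives then come from `∂_j log φ = ∂_j φ / φ`. -/

noncomputable def spCLM : (Fin 4 → ℝ) →L[ℝ] (Fin 3 → ℝ) :=
  ContinuousLinearMap.pi fun j => ContinuousLinearMap.proj j.succ

lemma pdR_zero_comp_sp {F : (Fin 3 → ℝ) → ℝ} {x : Fin 4 → ℝ}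
    (hF : DifferentiableAt ℝ F (sp x)) : pdR 0 (fun y => F (sp y)) x = 0 := by
  have hsp : spCLM (Pi.single 0 1) = 0 := by
    funext i
    simp [spCLM, Fin.succ_ne_zero]
  change fderiv ℝ (F ∘ sp) x _ = 0
  rw [(hF.hasFDerivAt.comp x spCLM.hasFDerivAt).fderiv]
  simp [hsp]

lemma pdR_log {n : ℕ} {F : (Fin n → ℝ) → ℝ} {x : Fin n → ℝ} (j : Fin n)
    (hF : DifferentiableAt ℝ F x) (hx : F x ≠ 0) :
    pdR j (fun y => Real.log (F y)) x = (F x)⁻¹ * pdR j F x := by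
  simp [pdR, fderiv.log hF hx]

lemma pdR_met (f g : ℝ → ℝ) (H : (Fin 3 → ℝ) → ℝ) (ν ρ lam : Fin 4) (x : Fin 4 → ℝ) :
    pdR ν (met f g H ρ lam) x =
      if ρ = lam then
        (if ρ = 0 then pdR ν (fun y => f (H (sp y))) x else -pdR ν (fun y => g (H (sp y))) x)
      else 0 := by
  unfold met
  split_ifs <;> simp [pdR, fderiv_fun_neg]

lemma pdR_met_eq_zero {f g : ℝ → ℝ} {H : (Fin 3 → ℝ) → ℝ} {ν ρ lam : Fin 4} {x : Fin 4 → ℝ}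
    (hf : DifferentiableAt ℝ (fun u => f (H u)) (sp x))
    (hg : DifferentiableAt ℝ (fun u => g (H u)) (sp x)) (h : ρ ≠ lam ∨ ν = 0) :
    pdR ν (met f g H ρ lam) x = 0 := by
  rw [pdR_met]
  rcases h with h | rfl
  · simp [h]
  · simp [pdR_zero_comp_sp hf, pdR_zero_comp_sp (F := fun u => g (H u)) hg]

lemma chrLow_eq (f g : ℝ → ℝ) (H : (Fin 3 → ℝ) → ℝ) (μ ν lam : Fin 4) (x : Fin 4 → ℝ) :
    chrLow f g H μ ν lam x = (if μ = 0 then (f (H (sp x)))⁻¹ else (g (H (sp x)))⁻¹) / 2 *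
      (pdR ν (met f g H μ lam) x + pdR lam (met f g H μ ν) x - pdR μ (met f g H ν lam) x) := by
  simp only [chrLow, chrUp, eta, metInv, ite_mul, zero_mul, Finset.sum_ite_eq,
    Finset.mem_univ, if_true]
  split_ifs <;> ring

/-- (Christoffel symbols of the isotropic metric
`ds² = f(H) dt² − g(H) d\vec{x}²` on `ℝ⁴`, Section 4 of the paper.)
With `x⁰ = t` and `H : ℝ³ → ℝ`, `f, g : ℝ → ℝ` smooth with `f, g > 0`:
`Γ_{0j0} = Γ_{00j} = ½ ∂_j log(f∘H)` for `1 ≤ j ≤ 3`;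
`Γ_{j00} = −∂_j(f∘H)/(2 g(H))` for `1 ≤ j ≤ 3`;
`Γ_{kjk} = Γ_{kkj} = −½ ∂_j log(g∘H)` for `1 ≤ j, k ≤ 3`;
`Γ_{jkk} = ½ ∂_j log(g∘H)` for `1 ≤ j ≠ k ≤ 3`;
and every component of `Γ` not of one of these forms is zero. -/
theorem stmt12 (H : (Fin 3 → ℝ) → ℝ) (f g : ℝ → ℝ)
    (hH : ContDiff ℝ (⊤ : ℕ∞) H) (hf : ContDiff ℝ (⊤ : ℕ∞) f)
    (hg : ContDiff ℝ (⊤ : ℕ∞) g)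
    (hfpos : ∀ t, 0 < f t) (hgpos : ∀ t, 0 < g t) :
    ∀ x : Fin 4 → ℝ,
      (∀ j : Fin 4, j ≠ 0 →
        chrLow f g H 0 j 0 x = (1 / 2 : ℝ) * pdR j (fun y => Real.log (f (H (sp y)))) x ∧
        chrLow f g H 0 0 j x = (1 / 2 : ℝ) * pdR j (fun y => Real.log (f (H (sp y)))) x) ∧
      (∀ j : Fin 4, j ≠ 0 →
        chrLow f g H j 0 0 x = -(pdR j (fun y => f (H (sp y))) x) / (2 * g (H (sp x)))) ∧
      (∀ j k : Fin 4, j ≠ 0 → k ≠ 0 →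
        chrLow f g H k j k x = -(1 / 2 : ℝ) * pdR j (fun y => Real.log (g (H (sp y)))) x ∧
        chrLow f g H k k j x = -(1 / 2 : ℝ) * pdR j (fun y => Real.log (g (H (sp y)))) x) ∧
      (∀ j k : Fin 4, j ≠ 0 → k ≠ 0 → j ≠ k →
        chrLow f g H j k k x = (1 / 2 : ℝ) * pdR j (fun y => Real.log (g (H (sp y)))) x) ∧
      (∀ μ ν lam : Fin 4,
        ¬ ((μ = 0 ∧ ν ≠ 0 ∧ lam = 0) ∨ (μ = 0 ∧ ν = 0 ∧ lam ≠ 0) ∨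
           (μ ≠ 0 ∧ ν = 0 ∧ lam = 0) ∨ (μ ≠ 0 ∧ ν ≠ 0 ∧ lam = μ) ∨
           (μ ≠ 0 ∧ lam ≠ 0 ∧ ν = μ) ∨ (μ ≠ 0 ∧ ν ≠ 0 ∧ ν = lam ∧ μ ≠ ν)) →
        chrLow f g H μ ν lam x = 0) := by
  intro x
  have hF : Differentiable ℝ (fun u => f (H u)) :=
    (hf.differentiable (by simp)).comp (hH.differentiable (by simp))
  have hG : Differentiable ℝ (fun u => g (H u)) :=
    (hg.differentiable (by simp)).comp (hH.differentiable (by simp))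
  have hFx : DifferentiableAt ℝ (fun y => f (H (sp y))) x := (hF _).comp x spCLM.differentiableAt
  have hGx : DifferentiableAt ℝ (fun y => g (H (sp y))) x := (hG _).comp x spCLM.differentiableAt
  have hfx := (hfpos (H (sp x))).ne'
  have hgx := (hgpos (H (sp x))).ne'
  refine ⟨fun j hj => ?_, fun j hj => ?_, fun j k hj hk => ?_, fun j k hj hk hjk => ?_,
    fun μ ν lam hnot => ?_⟩
  · simp [chrLow_eq, pdR_met, pdR_log j hFx hfx, hj, Ne.symm hj]
    ring
  · simp [chrLow_eq, pdR_met, hj]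
    ring
  · simp [chrLow_eq, pdR_met, pdR_log j hGx hgx, hj, hk]
    refine ⟨?_, by ring⟩
    split_ifs <;> grind
  · simp [chrLow_eq, pdR_met, pdR_log j hGx hgx, hj, hk, hjk]
    ring
  · rw [chrLow_eq, pdR_met_eq_zero (hF _) (hG _) (by grind),
      pdR_met_eq_zero (hF _) (hG _) (by grind), pdR_met_eq_zero (hF _) (hG _) (by grind)]
    simp
end
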